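/- arXiv:1412.3095 — 5 statements merged into one kernel-verified Lean document; each statement's English description precedes it below -/
import Mathlib

section
/- Let p > q > 1 be integers and let ((F_1,…,F_k), I_sep) determine a filled AUX(p,q) instance. Then in any feasible schedule of all tasks of the instance (separator, auxiliary and pending tasks), no task arising from block F_i starts before time ofs(F_i), for every i = 1,…,k. -/
/-- A task: an integer release time `r`, an integer deadline `d` (together forming the
availability interval `[r, d]`), and a processing time `len : ℕ`. -/
structure Job where
  r : ℤ
  d : ℤ
  len : ℕ

/-- A schedule `t` (real starting times) is feasible for the family of tasks `T`:
every task starts no earlier than its release time, completes no later than its deadline,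
and the execution intervals `[t i, t i + len i)` are pairwise disjoint. -/
def FeasibleSchedule {ι : Type} (T : ι → Job) (t : ι → ℝ) : Prop :=
  (∀ i, ((T i).r : ℝ) ≤ t i ∧ t i + ((T i).len : ℝ) ≤ ((T i).d : ℝ)) ∧
  Pairwise fun i j => Disjoint (Set.Ico (t i) (t i + ((T i).len : ℝ)))
    (Set.Ico (t j) (t j + ((T j).len : ℝ)))

/-- A block: a finite set of auxiliary tasks (given relative to the block's offset), an
optional pair of relative deadlines `(d'_p, d_p)` for a long pending task of length `p`,
and an optional pair of relative deadlines `(d'_q, d_q)` for a short pending task of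
length `q`. -/
structure Block (p q : ℕ) where
  auxJobs : List Job
  pendP : Option (ℤ × ℤ)
  pendQ : Option (ℤ × ℤ)

instance {p q : ℕ} : Inhabited (Block p q) := ⟨⟨[], none, none⟩⟩

/-- The length of a block: the sum of the processing times of all its tasks
(auxiliary and pending). -/
def Block.L {p q : ℕ} (F : Block p q) : ℕ :=
  (F.auxJobs.map Job.len).sum + (F.pendP.elim 0 fun _ => p) + (F.pendQ.elim 0 fun _ => q)

/-- Well-formedness of a block: auxiliary tasks have processing times in `{p, q}`,
non-negative release times, and all deadlines of the block lie in `[1, L(F)+1]`;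
for each pending task the two deadlines satisfy `d' ≤ d`. -/
def Block.WF {p q : ℕ} (F : Block p q) : Prop :=
  (∀ T ∈ F.auxJobs, (T.len = p ∨ T.len = q) ∧ 0 ≤ T.r ∧ 1 ≤ T.d ∧ T.d ≤ (F.L : ℤ) + 1) ∧
  (∀ dd ∈ F.pendP, dd.1 ≤ dd.2 ∧ 1 ≤ dd.1 ∧ dd.2 ≤ (F.L : ℤ) + 1) ∧
  (∀ dd ∈ F.pendQ, dd.1 ≤ dd.2 ∧ 1 ≤ dd.1 ∧ dd.2 ≤ (F.L : ℤ) + 1)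

/-- The offset of the `i`-th block (0-based): `ofs 0 = 0`, and
`ofs (i+1) = ofs i + L(F_i) + (q + 1 if a separator is placed after block i else 0)`. -/
def ofs (p q : ℕ) (B : List (Block p q)) (S : Finset ℕ) : ℕ → ℤ
  | 0 => 0
  | i + 1 => ofs p q B S i + ((B.getD i default).L : ℤ) +
      (if i ∈ S then (q : ℤ) + 1 else 0)

/-- The separator tasks of the filled instance, each labelled by the 0-based index of the
block it follows: for `i ∈ S`, the task `([ofs i + L i + 1, ofs i + L i + q + 1], q)`. -/
def sepList (p q : ℕ) (B : List (Block p q)) (S : Finset ℕ) : List (ℕ × Job) :=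
  (List.range B.length).filterMap fun i =>
    if i ∈ S then
      some (i, ⟨ofs p q B S i + ((B.getD i default).L : ℤ) + 1,
        ofs p q B S i + ((B.getD i default).L : ℤ) + q + 1, q⟩)
    else none

/-- The auxiliary tasks of the filled instance, labelled by the 0-based index of the block
they come from, shifted by the block's offset. -/
def auxList (p q : ℕ) (B : List (Block p q)) (S : Finset ℕ) : List (ℕ × Job) :=
  (List.range B.length).flatMap fun i =>
    (B.getD i default).auxJobs.map fun T =>
      (i, ⟨T.r + ofs p q B S i, T.d + ofs p q B S i, T.len⟩)

/-- The long pending tasks of the filled instance, in the order of the defining blocks: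
each entry records the 0-based index of the defining block and the absolute pair of
deadlines `(d' + ofs, d + ofs)`. -/
def pendPList (p q : ℕ) (B : List (Block p q)) (S : Finset ℕ) : List (ℕ × ℤ × ℤ) :=
  (List.range B.length).filterMap fun i =>
    (B.getD i default).pendP.map fun dd =>
      (i, dd.1 + ofs p q B S i, dd.2 + ofs p q B S i)

/-- The short pending tasks of the filled instance, analogous to `pendPList`. -/
def pendQList (p q : ℕ) (B : List (Block p q)) (S : Finset ℕ) : List (ℕ × ℤ × ℤ) :=
  (List.range B.length).filterMap fun i =>
    (B.getD i default).pendQ.map fun dd =>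
      (i, dd.1 + ofs p q B S i, dd.2 + ofs p q B S i)

/-- The index type of the tasks of the filled AUX(p,q) instance:
separator, auxiliary, long pending and short pending tasks. -/
abbrev FilledIdx (p q : ℕ) (B : List (Block p q)) (S : Finset ℕ) : Type :=
  Fin (sepList p q B S).length ⊕ Fin (auxList p q B S).length ⊕
    Fin (pendPList p q B S).length ⊕ Fin (pendQList p q B S).length

/-- The family of all tasks of the filled AUX(p,q) instance.  The long pending task with
absolute deadlines `(d', d)` is the task `([0, d], p)` (with early deadline `d'`), and
similarly for the short pending tasks. -/
def filledFamily (p q : ℕ) (B : List (Block p q)) (S : Finset ℕ) :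
    FilledIdx p q B S → Job :=
  Sum.elim (fun i => ((sepList p q B S).get i).2) <|
    Sum.elim (fun i => ((auxList p q B S).get i).2) <|
      Sum.elim (fun i => ⟨0, ((pendPList p q B S).get i).2.2, p⟩)
        (fun i => ⟨0, ((pendQList p q B S).get i).2.2, q⟩)

/-- Feasibility of the filled AUX(p,q) instance: there are equally many pending tasks of
each length, and there is a feasible schedule of all tasks such that for each index `i`,
the `i`-th long pending task completes by its early deadline or the `i`-th short pending
task completes by its early deadline. -/
def FilledFeasible (p q : ℕ) (B : List (Block p q)) (S : Finset ℕ) : Prop :=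
  ∃ (h : (pendPList p q B S).length = (pendQList p q B S).length)
    (t : FilledIdx p q B S → ℝ),
    FeasibleSchedule (filledFamily p q B S) t ∧
    ∀ i : Fin (pendPList p q B S).length,
      t (Sum.inr (Sum.inr (Sum.inl i))) + (p : ℝ) ≤
          (((pendPList p q B S).get i).2.1 : ℝ) ∨
        t (Sum.inr (Sum.inr (Sum.inr (Fin.cast h i)))) + (q : ℝ) ≤
          (((pendQList p q B S).get (Fin.cast h i)).2.1 : ℝ)

/-!
Argue by induction on the block index. If every task of a block before `n` starts at or after
its block's offset, a task `k` of block `n` (of length at least 2, released at time `≥ 0`)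
passes every earlier offset in turn: once `ofs m ≤ t k`, the tasks of block `m` fill `L(F_m)`
units of the window `[ofs m, ofs m + L(F_m) + 1)`, while `k` would meet this window in more than
one unit if it started before `ofs (m + 1)`. Without a separator after block `m` this is because
`ofs (m + 1) + 1` is the end of the window; with one, because the separator is pinned to the
`q` units right after the window.
-/

open MeasureTheory Set Function

theorem sum_measureReal_inter_Ico_le {ι : Type*} [Fintype ι] {I : ι → Set ℝ}
    (hI : ∀ i, MeasurableSet (I i)) (hd : Pairwise (Disjoint on I)) {a b : ℝ} (hab : a ≤ b) :
    ∑ i, volume.real (I i ∩ Ico a b) ≤ b - a := by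
  have hW : volume (Ico a b) ≠ ⊤ := by simp
  rw [← measureReal_iUnion_fintype
    (fun i j hij => (hd hij).mono inter_subset_left inter_subset_left)
    (fun i => (hI i).inter measurableSet_Ico)
    (fun _ => measure_ne_top_of_subset inter_subset_right hW)]
  calc volume.real (⋃ i, I i ∩ Ico a b) ≤ volume.real (Ico a b) :=
        measureReal_mono (iUnion_subset fun _ => inter_subset_right) hW
    _ = b - a := by rw [Real.volume_real_Ico, max_eq_left (sub_nonneg.mpr hab)]

theorem add_le_of_disjoint_Ico {s a x b : ℝ} (h : Disjoint (Ico s (s + a)) (Ico x (x + b)))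
    (ha : 0 < a) (hb : 0 < b) (hx : x < s + a) : x + b ≤ s := by
  by_contra! hs
  rw [Ico_disjoint_Ico] at h
  have : max s x < min (s + a) (x + b) :=
    max_lt (lt_min (by linarith) hs) (lt_min hx (by linarith))
  linarith

theorem List.sum_map_flatMap_range_of_fst {β M : Type*} [AddCommMonoid M] {n m : ℕ}
    (hm : m < n) (f : ℕ → List (ℕ × β)) (hf : ∀ i, ∀ x ∈ f i, x.1 = i) (g : ℕ × β → M) :
    (((List.range n).flatMap f).map fun x => if x.1 = m then g x else 0).sum =
      ((f m).map g).sum := by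
  rw [List.map_flatMap, List.flatMap_def, List.sum_flatten, List.map_map,
    List.sum_map_eq_nsmul_single m, List.count_eq_one_of_mem List.nodup_range
      (List.mem_range.mpr hm), one_smul]
  · refine congrArg List.sum (List.map_congr_left fun x hx => ?_)
    rw [if_pos (hf m x hx)]
  · intro i hi _
    refine List.sum_eq_zero fun y hy => ?_
    obtain ⟨x, hx, rfl⟩ := List.mem_map.mp hy
    rw [if_neg (by rw [hf i x hx]; exact hi)]

theorem List.getD_mem_of_lt {α : Type*} {l : List α} {d : α} {n : ℕ} (h : n < l.length) :
    l.getD n d ∈ l := by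
  rw [List.getD_eq_getElem l d h]; exact List.getElem_mem h

section FilledInstance

variable {p q : ℕ} {B : List (Block p q)} {S : Finset ℕ}

abbrev BlockIdx (p q : ℕ) (B : List (Block p q)) (S : Finset ℕ) : Type :=
  Fin (auxList p q B S).length ⊕ Fin (pendPList p q B S).length ⊕ Fin (pendQList p q B S).length

def blockLabel : BlockIdx p q B S → ℕ :=
  Sum.elim (fun j => ((auxList p q B S).get j).1) <|
    Sum.elim (fun j => ((pendPList p q B S).get j).1) (fun j => ((pendQList p q B S).get j).1)

theorem ofs_nonneg (i : ℕ) : 0 ≤ ofs p q B S i := by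
  induction i with
  | zero => rfl
  | succ i ih => rw [ofs]; split_ifs <;> omega

theorem exists_of_mem_auxList {x : ℕ × Job} (hx : x ∈ auxList p q B S) :
    ∃ c < B.length, ∃ T ∈ (B.getD c default).auxJobs,
      x = (c, ⟨T.r + ofs p q B S c, T.d + ofs p q B S c, T.len⟩) := by
  simp only [auxList, List.mem_flatMap, List.mem_range, List.mem_map] at hx
  obtain ⟨c, hc, T, hT, rfl⟩ := hx
  exact ⟨c, hc, T, hT, rfl⟩

theorem exists_of_mem_pendingList (pend : Block p q → Option (ℤ × ℤ)) {x : ℕ × ℤ × ℤ}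
    (hx : x ∈ (List.range B.length).filterMap fun i =>
      (pend (B.getD i default)).map fun dd => (i, dd.1 + ofs p q B S i, dd.2 + ofs p q B S i)) :
    ∃ c < B.length, ∃ dd ∈ pend (B.getD c default),
      x = (c, dd.1 + ofs p q B S c, dd.2 + ofs p q B S c) := by
  simp only [List.mem_filterMap, List.mem_range, Option.map_eq_some_iff] at hx
  obtain ⟨c, hc, dd, hdd, rfl⟩ := hx
  exact ⟨c, hc, dd, hdd, rfl⟩

theorem exists_sepList_get {m : ℕ} (hm : m < B.length) (hmS : m ∈ S) :
    ∃ js : Fin (sepList p q B S).length, (sepList p q B S).get js =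
      (m, ⟨ofs p q B S m + (B.getD m default).L + 1,
        ofs p q B S m + (B.getD m default).L + q + 1, q⟩) := by
  apply List.get_of_mem
  simp only [sepList, List.mem_filterMap, List.mem_range]
  exact ⟨m, hm, by rw [if_pos hmS]⟩

theorem blockTask_bounds (hWF : ∀ F ∈ B, F.WF) (k : BlockIdx p q B S) :
    blockLabel k < B.length ∧ 0 ≤ (filledFamily p q B S (.inr k)).r ∧
      (filledFamily p q B S (.inr k)).d ≤
        ofs p q B S (blockLabel k) + (B.getD (blockLabel k) default).L + 1 := by
  rcases k with j | j | j
  · obtain ⟨c, hc, T, hT, hj⟩ := exists_of_mem_auxList (List.get_mem _ j)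
    obtain ⟨-, hr, -, hd⟩ := (hWF _ (List.getD_mem_of_lt hc)).1 T hT
    simp only [blockLabel, filledFamily, Sum.elim_inl, Sum.elim_inr, hj]
    have := ofs_nonneg (p := p) (B := B) (S := S) c
    exact ⟨hc, by omega, by omega⟩
  · obtain ⟨c, hc, dd, hdd, hj⟩ := exists_of_mem_pendingList Block.pendP (List.get_mem _ j)
    have hd := ((hWF _ (List.getD_mem_of_lt hc)).2.1 dd hdd).2.2
    simp only [blockLabel, filledFamily, Sum.elim_inl, Sum.elim_inr, hj]
    exact ⟨hc, le_rfl, by omega⟩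
  · obtain ⟨c, hc, dd, hdd, hj⟩ := exists_of_mem_pendingList Block.pendQ (List.get_mem _ j)
    have hd := ((hWF _ (List.getD_mem_of_lt hc)).2.2 dd hdd).2.2
    simp only [blockLabel, filledFamily, Sum.elim_inr, hj]
    exact ⟨hc, le_rfl, by omega⟩

theorem one_lt_blockTask_len (hq : 1 < q) (hpq : q < p) (hWF : ∀ F ∈ B, F.WF)
    (k : BlockIdx p q B S) : 1 < (filledFamily p q B S (.inr k)).len := by
  rcases k with j | j | j
  · obtain ⟨c, hc, T, hT, hj⟩ := exists_of_mem_auxList (List.get_mem _ j)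
    have hlen := ((hWF _ (List.getD_mem_of_lt hc)).1 T hT).1
    simp only [filledFamily, Sum.elim_inl, Sum.elim_inr, hj]
    omega
  · exact hq.trans hpq
  · exact hq

theorem sum_len_blockLabel_eq {m : ℕ} (hm : m < B.length) :
    ∑ k : BlockIdx p q B S,
      (if blockLabel k = m then (filledFamily p q B S (.inr k)).len else 0) =
      (B.getD m default).L := by
  have haux : ∑ j : Fin (auxList p q B S).length,
      (if ((auxList p q B S).get j).1 = m then ((auxList p q B S).get j).2.len else 0) =
      ((B.getD m default).auxJobs.map Job.len).sum := by
    simp only [List.get_eq_getElem,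
      Fin.sum_univ_fun_getElem _ fun x : ℕ × Job => if x.1 = m then x.2.len else 0]
    rw [auxList, List.sum_map_flatMap_range_of_fst hm, List.map_map]
    · rfl
    · simp
  have hpend (pend : Block p q → Option (ℤ × ℤ)) (len : ℕ) :
      let pl := (List.range B.length).filterMap fun i =>
        (pend (B.getD i default)).map fun dd => (i, dd.1 + ofs p q B S i, dd.2 + ofs p q B S i)
      ∑ j : Fin pl.length, (if (pl.get j).1 = m then len else 0) =
        (pend (B.getD m default)).elim 0 fun _ => len := by
    intro pl
    simp only [pl, List.get_eq_getElem,
      Fin.sum_univ_fun_getElem _ fun x : ℕ × ℤ × ℤ => if x.1 = m then len else 0]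
    rw [List.filterMap_eq_flatMap_toList, List.sum_map_flatMap_range_of_fst hm]
    · cases pend (B.getD m default) <;> simp
    · intro i x hx
      simp only [Option.mem_toList, Option.map_eq_some_iff] at hx
      obtain ⟨_, _, rfl⟩ := hx
      rfl
  rw [Fintype.sum_sum_type, Fintype.sum_sum_type, ← add_assoc]
  exact congrArg₂ _ (congrArg₂ _ haux (hpend _ p)) (hpend _ q)

theorem one_lt_overlap_of_lt_ofs_succ (hq : 0 < q) {t : FilledIdx p q B S → ℝ}
    (hfeas : FeasibleSchedule (filledFamily p q B S) t) {m : ℕ} (hm : m < B.length)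
    {k : BlockIdx p q B S} (hlen : 1 < (filledFamily p q B S (.inr k)).len)
    (hx : t (.inr k) < ofs p q B S (m + 1)) :
    1 < min (t (.inr k) + (filledFamily p q B S (.inr k)).len)
      (ofs p q B S m + (B.getD m default).L + 1 : ℤ) - t (.inr k) := by
  set E : ℤ := ofs p q B S m + (B.getD m default).L + 1 with hE
  have hℓ : (1 : ℝ) < (filledFamily p q B S (.inr k)).len := by exact_mod_cast hlen
  by_cases hmS : m ∈ S
  · obtain ⟨js, hjs⟩ := exists_sepList_get hm hmS
    have hsep : filledFamily p q B S (.inl js) = ⟨E, E + q, q⟩ := by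
      simp only [filledFamily, Sum.elim_inl, hjs, hE, Job.mk.injEq, true_and, and_true]
      ring
    have hrel := hfeas.1 (.inl js)
    have hdisj := hfeas.2 (show (.inl js : FilledIdx p q B S) ≠ .inr k from Sum.inl_ne_inr)
    rw [hsep] at hrel hdisj
    have hofs : ofs p q B S (m + 1) = E + q := by rw [ofs, if_pos hmS, hE]; ring
    rw [hofs] at hx
    push_cast at hrel hx
    have := add_le_of_disjoint_Ico hdisj (Nat.cast_pos.mpr hq) (by linarith) (by linarith)
    rw [min_eq_left (by linarith)]
    linarith
  · have hofs : ofs p q B S (m + 1) = E - 1 := by rw [ofs, if_neg hmS, hE]; ring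
    rw [hofs] at hx
    push_cast at hx
    rw [lt_sub_iff_add_lt, lt_min_iff]
    constructor <;> linarith

theorem overlap_le_one (hWF : ∀ F ∈ B, F.WF) {t : FilledIdx p q B S → ℝ}
    (hfeas : FeasibleSchedule (filledFamily p q B S) t) {m : ℕ} (hm : m < B.length)
    (hblock : ∀ k, blockLabel k = m → (ofs p q B S m : ℝ) ≤ t (.inr k))
    {k : BlockIdx p q B S} (hk : blockLabel k ≠ m) :
    volume.real (Ico (t (.inr k)) (t (.inr k) + (filledFamily p q B S (.inr k)).len) ∩
      Ico (ofs p q B S m : ℝ) (ofs p q B S m + (B.getD m default).L + 1 : ℤ)) ≤ 1 := by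
  set W := Ico (ofs p q B S m : ℝ) (ofs p q B S m + (B.getD m default).L + 1 : ℤ)
  set I : FilledIdx p q B S → Set ℝ := fun i => Ico (t i) (t i + (filledFamily p q B S i).len)
  have hvol_block (k' : BlockIdx p q B S) (hk' : blockLabel k' = m) :
      volume.real (I (.inr k') ∩ W) = (filledFamily p q B S (.inr k')).len := by
    have hd := (blockTask_bounds hWF k').2.2
    rw [hk'] at hd
    have hend := (hfeas.1 (.inr k')).2
    rw [inter_eq_left.mpr (Ico_subset_Ico (hblock k' hk') (hend.trans (by exact_mod_cast hd))),
      Real.volume_real_Ico, add_sub_cancel_left, max_eq_left (Nat.cast_nonneg _)]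
  have hblocks_and_k : ∑ k' : BlockIdx p q B S,
      (if blockLabel k' = m then ((filledFamily p q B S (.inr k')).len : ℝ) else 0) +
        volume.real (I (.inr k) ∩ W) ≤ ∑ k' : BlockIdx p q B S, volume.real (I (.inr k') ∩ W) := by
    calc _ = ∑ k' : BlockIdx p q B S,
          ((if blockLabel k' = m then ((filledFamily p q B S (.inr k')).len : ℝ) else 0) +
            if k = k' then volume.real (I (.inr k') ∩ W) else 0) := by
          rw [Finset.sum_add_distrib, Finset.sum_ite_eq, if_pos (Finset.mem_univ k)]
      _ ≤ _ := Finset.sum_le_sum fun k' _ => ?_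
    by_cases hk' : blockLabel k' = m
    · rw [if_pos hk', if_neg (by rintro rfl; exact hk hk'), hvol_block k' hk', add_zero]
    · rw [if_neg hk', zero_add]
      split_ifs
      exacts [le_rfl, measureReal_nonneg]
  have hblocks : ∑ k' : BlockIdx p q B S, volume.real (I (.inr k') ∩ W) ≤
      ∑ i, volume.real (I i ∩ W) := by
    rw [Fintype.sum_sum_type (f := fun i => volume.real (I i ∩ W))]
    exact le_add_of_nonneg_left (Finset.sum_nonneg fun _ _ => measureReal_nonneg)
  have htotal := sum_measureReal_inter_Ico_le (I := I) (fun _ => measurableSet_Ico) hfeas.2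
    (a := ofs p q B S m) (b := (ofs p q B S m + (B.getD m default).L + 1 : ℤ))
    (by push_cast; linarith)
  have hblock_len := congrArg (Nat.cast : ℕ → ℝ) (sum_len_blockLabel_eq (S := S) hm)
  have hwidth : ((ofs p q B S m + (B.getD m default).L + 1 : ℤ) : ℝ) - ofs p q B S m =
      (B.getD m default).L + 1 := by
    push_cast; ring
  push_cast at hblock_len
  linarith

theorem ofs_succ_le_of_ofs_le (hq : 0 < q) (hWF : ∀ F ∈ B, F.WF) {t : FilledIdx p q B S → ℝ}
    (hfeas : FeasibleSchedule (filledFamily p q B S) t) {m : ℕ} (hm : m < B.length)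
    (hblock : ∀ k, blockLabel k = m → (ofs p q B S m : ℝ) ≤ t (.inr k))
    {k : BlockIdx p q B S} (hk : blockLabel k ≠ m) (hlen : 1 < (filledFamily p q B S (.inr k)).len)
    (hstart : (ofs p q B S m : ℝ) ≤ t (.inr k)) :
    (ofs p q B S (m + 1) : ℝ) ≤ t (.inr k) := by
  by_contra! hx
  have hroom := one_lt_overlap_of_lt_ofs_succ hq hfeas hm hlen hx
  have hvol := overlap_le_one hWF hfeas hm hblock hk
  rw [Ico_inter_Ico, sup_eq_left.mpr hstart, Real.volume_real_Ico] at hvol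
  exact (lt_max_of_lt_left hroom).not_ge hvol

theorem ofs_blockLabel_le (hq : 1 < q) (hpq : q < p) (hWF : ∀ F ∈ B, F.WF)
    {t : FilledIdx p q B S → ℝ} (hfeas : FeasibleSchedule (filledFamily p q B S) t)
    (k : BlockIdx p q B S) : (ofs p q B S (blockLabel k) : ℝ) ≤ t (.inr k) := by
  suffices h : ∀ n, ∀ k : BlockIdx p q B S, blockLabel k = n → (ofs p q B S n : ℝ) ≤ t (.inr k)
    from h _ k rfl
  intro n
  induction n using Nat.strong_induction_on with
  | _ n ih =>
  intro k hkn
  obtain ⟨hlt, hr, -⟩ := blockTask_bounds hWF k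
  have hstep (m : ℕ) (hmn : m ≤ n) : (ofs p q B S m : ℝ) ≤ t (.inr k) := by
    induction m with
    | zero =>
      rw [ofs, Int.cast_zero]
      exact (Int.cast_nonneg_iff.mpr hr).trans (hfeas.1 (.inr k)).1
    | succ m ihm =>
      exact ofs_succ_le_of_ofs_le (by omega) hWF hfeas (by omega)
        (fun k' hk' => ih m (by omega) k' hk') (by omega)
        (one_lt_blockTask_len hq hpq hWF k) (ihm (by omega))
  exact hstep n le_rfl

end FilledInstance

theorem no_start_before_offset_general (p q : ℕ) (hq : 1 < q) (hpq : q < p)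
    (B : List (Block p q)) (S : Finset ℕ)
    (hWF : ∀ F ∈ B, F.WF)
    (t : FilledIdx p q B S → ℝ)
    (hfeas : FeasibleSchedule (filledFamily p q B S) t) :
    (∀ j : Fin (auxList p q B S).length,
      ((ofs p q B S ((auxList p q B S).get j).1 : ℤ) : ℝ) ≤ t (Sum.inr (Sum.inl j))) ∧
    (∀ j : Fin (pendPList p q B S).length,
      ((ofs p q B S ((pendPList p q B S).get j).1 : ℤ) : ℝ) ≤
        t (Sum.inr (Sum.inr (Sum.inl j)))) ∧
    (∀ j : Fin (pendQList p q B S).length,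
      ((ofs p q B S ((pendQList p q B S).get j).1 : ℤ) : ℝ) ≤
        t (Sum.inr (Sum.inr (Sum.inr j)))) :=
  ⟨fun j => ofs_blockLabel_le hq hpq hWF hfeas (.inl j),
    fun j => ofs_blockLabel_le hq hpq hWF hfeas (.inr (.inl j)),
    fun j => ofs_blockLabel_le hq hpq hWF hfeas (.inr (.inr j))⟩

/-- Let `p > q > 1` and let a sequence of blocks `B` together with
separator positions `S` determine a filled AUX(p,q) instance (all blocks well formed,
separator positions among the blocks, equally many pending tasks of each length, and the
`i`-th long pending task defined in a strictly earlier block than the `i`-th short one).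
Then in any feasible schedule of all tasks of the instance, no task arising from a block
starts before that block's offset. -/
theorem no_start_before_offset (p q : ℕ) (hq : 1 < q) (hpq : q < p)
    (B : List (Block p q)) (S : Finset ℕ)
    (hWF : ∀ F ∈ B, F.WF) (hS : ∀ i ∈ S, i < B.length)
    (hN : (pendPList p q B S).length = (pendQList p q B S).length)
    (horder : ∀ i : Fin (pendPList p q B S).length,
      ((pendPList p q B S).get i).1 < ((pendQList p q B S).get (Fin.cast hN i)).1)
    (t : FilledIdx p q B S → ℝ)
    (hfeas : FeasibleSchedule (filledFamily p q B S) t) :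
    (∀ j : Fin (auxList p q B S).length,
      ((ofs p q B S ((auxList p q B S).get j).1 : ℤ) : ℝ) ≤ t (Sum.inr (Sum.inl j))) ∧
    (∀ j : Fin (pendPList p q B S).length,
      ((ofs p q B S ((pendPList p q B S).get j).1 : ℤ) : ℝ) ≤
        t (Sum.inr (Sum.inr (Sum.inl j)))) ∧
    (∀ j : Fin (pendQList p q B S).length,
      ((ofs p q B S ((pendQList p q B S).get j).1 : ℤ) : ℝ) ≤
        t (Sum.inr (Sum.inr (Sum.inr j)))) :=
  no_start_before_offset_general p q hq hpq B S hWF t hfeas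
end

section
/- Let p > q > 1 be integers and let ((F_1,…,F_k), I_sep) determine a filled AUX(p,q) instance with deadline sequences (d'_p,d_p)[1..N] and (d'_q,d_q)[1..N] (indexed in order of the defining blocks). Then these sequences satisfy the AUX(p,q) ordering conditions: for each l ∈ {p,q}, d'_l[1] ≤ d_l[1] ≤ d'_l[2] ≤ d_l[2] ≤ … ≤ d'_l[N] ≤ d_l[N], and d_p[i] ≤ d'_q[i] for all i = 1,…,N. -/
/-!
A pending task of block `i` has both deadlines in `[ofs i + 1, ofs i + L(F_i) + 1]`, and
`ofs i + L(F_i) ≤ ofs j` whenever `i < j`. So a pending task of an earlier block has its late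
deadline no later than the early deadline of any pending task of a later block. Each block
defines at most one pending task of each length, so consecutive entries of a pending sequence
come from strictly increasing blocks, while the `i`-th short task comes from a later block
than the `i`-th long one.
-/

section

variable {p q : ℕ} (B : List (Block p q)) (S : Finset ℕ)

lemma ofs_add_L_le_ofs_succ (i : ℕ) :
    ofs p q B S i + ((B.getD i default).L : ℤ) ≤ ofs p q B S (i + 1) := by
  simp only [ofs]
  split_ifs <;> omega

lemma ofs_monotone : Monotone (ofs p q B S) :=
  monotone_nat_of_le_succ fun i => by
    have := ofs_add_L_le_ofs_succ B S i
    omega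

lemma ofs_add_L_le_of_lt {i j : ℕ} (h : i < j) :
    ofs p q B S i + ((B.getD i default).L : ℤ) ≤ ofs p q B S j :=
  (ofs_add_L_le_ofs_succ B S i).trans (ofs_monotone B S h)

/-- `pendPList` and `pendQList` are, definitionally, `pendList` for `Block.pendP` and
`Block.pendQ`. -/
def pendList (pend : Block p q → Option (ℤ × ℤ)) : List (ℕ × ℤ × ℤ) :=
  (List.range B.length).filterMap fun i =>
    (pend (B.getD i default)).map fun dd =>
      (i, dd.1 + ofs p q B S i, dd.2 + ofs p q B S i)

def DeadlinesInBlock (x : ℕ × ℤ × ℤ) : Prop :=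
  ofs p q B S x.1 + 1 ≤ x.2.1 ∧ x.2.1 ≤ x.2.2 ∧
    x.2.2 ≤ ofs p q B S x.1 + ((B.getD x.1 default).L : ℤ) + 1

lemma pairwise_fst_lt_pendList (pend : Block p q → Option (ℤ × ℤ)) :
    (pendList B S pend).Pairwise fun x y => x.1 < y.1 := by
  refine List.Pairwise.filterMap _ ?_ (List.pairwise_lt_range (n := B.length))
  intro i j hij x hx y hy
  obtain ⟨_, _, rfl⟩ := Option.map_eq_some_iff.1 hx
  obtain ⟨_, _, rfl⟩ := Option.map_eq_some_iff.1 hy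
  exact hij

variable {B S}

lemma DeadlinesInBlock.snd_le_fst_of_fst_lt {x y : ℕ × ℤ × ℤ} (hx : DeadlinesInBlock B S x)
    (hy : DeadlinesInBlock B S y) (hxy : x.1 < y.1) : x.2.2 ≤ y.2.1 := by
  linarith [ofs_add_L_le_of_lt B S hxy, hx.2.2, hy.1]

lemma deadlinesInBlock_of_mem_pendList {pend : Block p q → Option (ℤ × ℤ)}
    (hpend : ∀ F ∈ B, ∀ dd ∈ pend F, dd.1 ≤ dd.2 ∧ 1 ≤ dd.1 ∧ dd.2 ≤ (F.L : ℤ) + 1)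
    {x : ℕ × ℤ × ℤ} (hx : x ∈ pendList B S pend) : DeadlinesInBlock B S x := by
  obtain ⟨i, hi, hmap⟩ := List.mem_filterMap.1 hx
  obtain ⟨dd, hdd, rfl⟩ := Option.map_eq_some_iff.1 hmap
  have hF : B.getD i default ∈ B :=
    List.getD_eq_getElem _ _ (List.mem_range.1 hi) ▸ List.getElem_mem _
  obtain ⟨h₁, h₂, h₃⟩ := hpend _ hF dd hdd
  exact ⟨by dsimp; omega, by dsimp; omega, by dsimp; omega⟩

lemma pendList_snd_le_fst_succ {pend : Block p q → Option (ℤ × ℤ)}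
    (hpend : ∀ F ∈ B, ∀ dd ∈ pend F, dd.1 ≤ dd.2 ∧ 1 ≤ dd.1 ∧ dd.2 ≤ (F.L : ℤ) + 1)
    (i : ℕ) (h : i + 1 < (pendList B S pend).length) :
    ((pendList B S pend).get ⟨i, Nat.lt_of_succ_lt h⟩).2.2 ≤
      ((pendList B S pend).get ⟨i + 1, h⟩).2.1 :=
  (deadlinesInBlock_of_mem_pendList hpend (List.get_mem _ _)).snd_le_fst_of_fst_lt
    (deadlinesInBlock_of_mem_pendList hpend (List.get_mem _ _))
    (List.pairwise_iff_get.1 (pairwise_fst_lt_pendList B S pend) _ _ (Nat.lt_add_one i))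

end

theorem filled_deadlines_ordered_general (p q : ℕ)
    (B : List (Block p q)) (S : Finset ℕ)
    (hWF : ∀ F ∈ B, F.WF)
    (hN : (pendPList p q B S).length = (pendQList p q B S).length)
    (horder : ∀ i : Fin (pendPList p q B S).length,
      ((pendPList p q B S).get i).1 < ((pendQList p q B S).get (Fin.cast hN i)).1) :
    (∀ i : Fin (pendPList p q B S).length,
      ((pendPList p q B S).get i).2.1 ≤ ((pendPList p q B S).get i).2.2) ∧
    (∀ (i : ℕ) (h : i + 1 < (pendPList p q B S).length),
      ((pendPList p q B S).get ⟨i, Nat.lt_of_succ_lt h⟩).2.2 ≤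
        ((pendPList p q B S).get ⟨i + 1, h⟩).2.1) ∧
    (∀ i : Fin (pendQList p q B S).length,
      ((pendQList p q B S).get i).2.1 ≤ ((pendQList p q B S).get i).2.2) ∧
    (∀ (i : ℕ) (h : i + 1 < (pendQList p q B S).length),
      ((pendQList p q B S).get ⟨i, Nat.lt_of_succ_lt h⟩).2.2 ≤
        ((pendQList p q B S).get ⟨i + 1, h⟩).2.1) ∧
    (∀ i : Fin (pendPList p q B S).length,
      ((pendPList p q B S).get i).2.2 ≤
        ((pendQList p q B S).get (Fin.cast hN i)).2.1) := by
  have hP := fun F hF => (hWF F hF).2.1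
  have hQ := fun F hF => (hWF F hF).2.2
  have inP := fun i => deadlinesInBlock_of_mem_pendList (S := S) hP (List.get_mem _ i)
  have inQ := fun i => deadlinesInBlock_of_mem_pendList (S := S) hQ (List.get_mem _ i)
  exact ⟨fun i => (inP i).2.1, pendList_snd_le_fst_succ hP, fun i => (inQ i).2.1,
    pendList_snd_le_fst_succ hQ, fun i => (inP i).snd_le_fst_of_fst_lt (inQ _) (horder i)⟩

/-- Let `p > q > 1` and let a sequence of blocks `B` together with
separator positions `S` determine a filled AUX(p,q) instance (all blocks well formed,
separator positions among the blocks, equally many pending tasks of each length, and the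
`i`-th long pending task defined in a strictly earlier block than the `i`-th short one).
Then the absolute deadline sequences of the pending tasks satisfy the AUX(p,q) ordering
conditions: for each length, `d'[1] ≤ d[1] ≤ d'[2] ≤ d[2] ≤ … ≤ d'[N] ≤ d[N]`, and
`d_p[i] ≤ d'_q[i]` for all `i`. -/
theorem filled_deadlines_ordered (p q : ℕ) (hq : 1 < q) (hpq : q < p)
    (B : List (Block p q)) (S : Finset ℕ)
    (hWF : ∀ F ∈ B, F.WF) (hS : ∀ i ∈ S, i < B.length)
    (hN : (pendPList p q B S).length = (pendQList p q B S).length)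
    (horder : ∀ i : Fin (pendPList p q B S).length,
      ((pendPList p q B S).get i).1 < ((pendQList p q B S).get (Fin.cast hN i)).1) :
    (∀ i : Fin (pendPList p q B S).length,
      ((pendPList p q B S).get i).2.1 ≤ ((pendPList p q B S).get i).2.2) ∧
    (∀ (i : ℕ) (h : i + 1 < (pendPList p q B S).length),
      ((pendPList p q B S).get ⟨i, Nat.lt_of_succ_lt h⟩).2.2 ≤
        ((pendPList p q B S).get ⟨i + 1, h⟩).2.1) ∧
    (∀ i : Fin (pendQList p q B S).length,
      ((pendQList p q B S).get i).2.1 ≤ ((pendQList p q B S).get i).2.2) ∧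
    (∀ (i : ℕ) (h : i + 1 < (pendQList p q B S).length),
      ((pendQList p q B S).get ⟨i, Nat.lt_of_succ_lt h⟩).2.2 ≤
        ((pendQList p q B S).get ⟨i + 1, h⟩).2.1) ∧
    (∀ i : Fin (pendPList p q B S).length,
      ((pendPList p q B S).get i).2.2 ≤
        ((pendQList p q B S).get (Fin.cast hN i)).2.1) :=
  filled_deadlines_ordered_general p q B S hWF hN horder
end

section
/- Let J be a finite set of tasks with integer release times, integer deadlines, and positive integer processing times. If J admits a feasible schedule with real starting times, then J admits a feasible schedule in which every starting time is an integer. -/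
section FloorRing

variable {α : Type*} [Ring α] [LinearOrder α] [IsStrictOrderedRing α] [FloorRing α]

theorem Set.disjoint_Ico_floor_add_natCast {a b : α} {l m : ℕ}
    (h : Disjoint (Set.Ico a (a + l)) (Set.Ico b (b + m))) :
    Disjoint (Set.Ico (⌊a⌋ : α) (⌊a⌋ + l)) (Set.Ico (⌊b⌋ : α) (⌊b⌋ + m)) := by
  rw [Set.Ico_disjoint_Ico] at h ⊢
  have hfloor := Int.floor_mono h
  rw [Int.floor_mono.map_min, Int.floor_mono.map_max, Int.floor_add_natCast,
    Int.floor_add_natCast] at hfloor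
  exact_mod_cast hfloor

end FloorRing

theorem FeasibleSchedule.floor {ι : Type} {T : ι → Job} {t : ι → ℝ}
    (ht : FeasibleSchedule T t) : FeasibleSchedule T fun i => (⌊t i⌋ : ℝ) := by
  obtain ⟨hbounds, hdisj⟩ := ht
  refine ⟨fun i => ⟨?_, ?_⟩, fun i j hij => Set.disjoint_Ico_floor_add_natCast (hdisj hij)⟩
  · exact (Int.cast_le (R := ℝ)).2 (Int.le_floor.2 (hbounds i).1)
  · linarith [Int.floor_le (t i), (hbounds i).2]

theorem exists_integral_schedule_general (ι : Type) (T : ι → Job)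
    (h : ∃ t : ι → ℝ, FeasibleSchedule T t) :
    ∃ t : ι → ℝ, FeasibleSchedule T t ∧ ∀ i, ∃ z : ℤ, t i = (z : ℝ) := by
  obtain ⟨t, ht⟩ := h
  exact ⟨fun i => ⌊t i⌋, ht.floor, fun i => ⟨⌊t i⌋, rfl⟩⟩

/-- A finite set of tasks with integer release times, integer deadlines
and positive integer processing times that admits a feasible schedule with real starting
times also admits a feasible schedule with integer starting times. -/
theorem exists_integral_schedule (ι : Type) [Fintype ι] (T : ι → Job)
    (hlen : ∀ i, 1 ≤ (T i).len) (h : ∃ t : ι → ℝ, FeasibleSchedule T t) :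
    ∃ t : ι → ℝ, FeasibleSchedule T t ∧ ∀ i, ∃ z : ℤ, t i = (z : ℝ) :=
  exists_integral_schedule_general ι T h
end

section
/- Let p > q > 1 be integers. Consider the three tasks A = ([1, 2q], q), B = ([0, p+2q+1], q), and P = ([0, p+2q], p). In every feasible schedule of {A, B, P} in which P completes by time p+q+1, the task B completes at a time ≥ p+2q+1; in particular the latest completion time of the schedule is at least p+2q+1. -/
lemma disj_cases {a b c d : ℝ} (h : Disjoint (Set.Ico a b) (Set.Ico c d))
    (hab : a < b) (hcd : c < d) : b ≤ c ∨ d ≤ a := by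
  by_contra hc
  push_neg at hc
  exact Set.disjoint_left.mp h
    ⟨le_max_left a c, max_lt hab hc.1⟩ ⟨le_max_right a c, max_lt hc.2 hcd⟩

/-- For integers `p > q > 1`, consider the three tasks of the `V⁺` block:
`A = ([1, 2q], q)`, `B = ([0, p+2q+1], q)` and the long pending task `P = ([0, p+2q], p)`.
In every feasible schedule in which `P` completes by time `p+q+1` (its early deadline),
task `B` completes at a time `≥ p+2q+1`; in particular some task completes at a time
`≥ p+2q+1`. -/
theorem vplus_early_forces_delay (p q : ℕ) (hq : 1 < q) (hpq : q < p)
    (t : Fin 3 → ℝ)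
    (hfeas : FeasibleSchedule
      ![⟨1, 2 * (q : ℤ), q⟩, ⟨0, (p : ℤ) + 2 * q + 1, q⟩, ⟨0, (p : ℤ) + 2 * q, p⟩] t)
    (hP : t 2 + (p : ℝ) ≤ (p : ℝ) + q + 1) :
    (p : ℝ) + 2 * q + 1 ≤ t 1 + q ∧
      ∃ i : Fin 3,
        (p : ℝ) + 2 * q + 1 ≤ t i +
          ((![⟨1, 2 * (q : ℤ), q⟩, ⟨0, (p : ℤ) + 2 * q + 1, q⟩,
              ⟨0, (p : ℤ) + 2 * q, p⟩] : Fin 3 → Job) i).len := by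
  obtain ⟨hwin, hdisj⟩ := hfeas
  have hq' : (1 : ℝ) < q := by exact_mod_cast hq
  have hpq' : (q : ℝ) < p := by exact_mod_cast hpq
  have h0 := hwin 0
  have h1 := hwin 1
  have h2 := hwin 2
  simp only [Matrix.cons_val_zero, Matrix.cons_val_one, Matrix.head_cons,
    Matrix.cons_val_two, Matrix.tail_cons] at h0 h1 h2
  push_cast at h0 h1 h2
  have g02 := hdisj (show (0 : Fin 3) ≠ 2 by decide)
  have g12 := hdisj (show (1 : Fin 3) ≠ 2 by decide)
  have g01 := hdisj (show (0 : Fin 3) ≠ 1 by decide)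
  simp only [Matrix.cons_val_zero, Matrix.cons_val_one, Matrix.head_cons,
    Matrix.cons_val_two, Matrix.tail_cons] at g02 g12 g01
  have d02 := disj_cases g02 (by linarith) (by linarith)
  have d12 := disj_cases g12 (by linarith) (by linarith)
  have d01 := disj_cases g01 (by linarith) (by linarith)
  -- A must come before P
  have hAP : t 0 + q ≤ t 2 := by
    rcases d02 with h | h
    · exact h
    · linarith [h0.1, h0.2]
  have ht2 : (q : ℝ) + 1 ≤ t 2 := by linarith [h0.1]
  have hB : (p : ℝ) + 2 * q + 1 ≤ t 1 + q := by
    rcases d12 with h | h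
    · -- B before P: t1 + q ≤ t2 ≤ q + 1
      have ht1 : t 1 ≤ 1 := by linarith
      rcases d01 with h' | h'
      · -- t1 + q ≤ t0 ≤ q, so t1 ≤ 0, t1 = 0, then t0 ≥ q and t0 ≤ 1 contradiction
        have ht0 : t 0 ≤ q := by linarith [h0.2]
        have : t 1 ≤ 0 := by linarith
        have : (q : ℝ) ≤ t 0 := by linarith [h1.1]
        linarith
      · linarith
    · linarith
  exact ⟨hB, 1, by simpa using hB⟩
end

section
/- Let p > q > 1 be integers. Consider the three tasks A = ([q+1, p+q], q), B = ([0, p+2q+1], p), and Q = ([0, p+2q], q). There exists a feasible schedule of {A, B, Q} in which every task completes by time p+2q. -/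
/-- For integers `p > q > 1`, the three tasks of the `V⁻` block,
`A = ([q+1, p+q], q)`, `B = ([0, p+2q+1], p)` and `Q = ([0, p+2q], q)`, admit a feasible
schedule in which every task completes by time `p+2q`. -/
theorem vminus_late_no_delay (p q : ℕ) (hq : 1 < q) (hpq : q < p) :
    ∃ t : Fin 3 → ℝ,
      FeasibleSchedule
        ![⟨(q : ℤ) + 1, (p : ℤ) + q, q⟩, ⟨0, (p : ℤ) + 2 * q + 1, p⟩,
          ⟨0, (p : ℤ) + 2 * q, q⟩] t ∧
      ∀ i : Fin 3,
        t i + ((![⟨(q : ℤ) + 1, (p : ℤ) + q, q⟩, ⟨0, (p : ℤ) + 2 * q + 1, p⟩,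
            ⟨0, (p : ℤ) + 2 * q, q⟩] : Fin 3 → Job) i).len ≤ (p : ℝ) + 2 * q := by
  have hq' : (1:ℝ) < q := by exact_mod_cast hq
  have hpq' : (q:ℝ) < p := by exact_mod_cast hpq
  refine ⟨![(p:ℝ), 0, (p:ℝ)+q], ⟨?_, ?_⟩, ?_⟩
  · intro i
    fin_cases i <;> constructor <;> simp <;> push_cast <;> first | linarith | exact_mod_cast hpq
  · intro i j hij
    fin_cases i <;> fin_cases j <;> simp_all <;>
      apply Set.Ico_disjoint_Ico_consecutive _ _ _ |>.mono <;>
      first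
        | exact Set.Ico_subset_Ico le_rfl (by linarith)
        | exact Set.Ico_subset_Ico (by linarith) le_rfl
  · intro i; fin_cases i <;> simp <;> push_cast <;> linarith
end
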